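/- If a 2 × 2 matrix G has all entries in {0, 1} and negative determinant, then G does not map F₂⁺ to F₂⁺; likewise, if G = x·G' where G' is a 2 × 2 matrix with all entries in {0, 1} and negative determinant, then G does not map F₂⁺ to F₂⁺. -/

import Mathlib

open Polynomial Finset

/-- A real polynomial is real-rooted (has only real zeros) if all of its complex
zeros are real; by convention constant polynomials, including `0`, are real-rooted. -/
def RealRooted (f : Polynomial ℝ) : Prop :=
  f = 0 ∨ ∀ z : ℂ, Polynomial.aeval z f = 0 → z.im = 0

/-- The real roots of `f`, with multiplicity, listed in decreasing order. -/
noncomputable def rootsDesc (f : Polynomial ℝ) : List ℝ :=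
  f.roots.sort (· ≥ ·)

/-- The chain condition `⋯ ≤ α₂ ≤ β₂ ≤ α₁ ≤ β₁` on the decreasingly ordered
roots of `f` and `g` (`α` the roots of `f`, `β` those of `g`; here 0-indexed). -/
def RootsInterleave (f g : Polynomial ℝ) : Prop :=
  (∀ (i : ℕ) (h1 : i < (rootsDesc f).length) (h2 : i < (rootsDesc g).length),
      (rootsDesc f).get ⟨i, h1⟩ ≤ (rootsDesc g).get ⟨i, h2⟩) ∧
  (∀ (i : ℕ) (h1 : i < (rootsDesc f).length) (h2 : i + 1 < (rootsDesc g).length),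
      (rootsDesc g).get ⟨i + 1, h2⟩ ≤ (rootsDesc f).get ⟨i, h1⟩)

/-- `Interleaver f g` means `f ≪ g`: both are real-rooted and either one of them is `0`
(the convention `f ≪ 0`, `0 ≪ f`), or both have positive leading coefficients and
their roots interleave as `⋯ ≤ α₂ ≤ β₂ ≤ α₁ ≤ β₁`. -/
def Interleaver (f g : Polynomial ℝ) : Prop :=
  RealRooted f ∧ RealRooted g ∧
    (f = 0 ∨ g = 0 ∨
      (0 < f.leadingCoeff ∧ 0 < g.leadingCoeff ∧ RootsInterleave f g))

/-- A sequence of real-rooted polynomials is interlacing if `f i ≪ f j` whenever `i < j`. -/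
def IsInterlacingSeq {n : ℕ} (f : Fin n → Polynomial ℝ) : Prop :=
  (∀ i, RealRooted (f i)) ∧ ∀ i j : Fin n, i < j → Interleaver (f i) (f j)

/-- Membership in `F_n⁺`: interlacing sequences all of whose members have
nonnegative coefficients. -/
def MemFPlus {n : ℕ} (f : Fin n → Polynomial ℝ) : Prop :=
  IsInterlacingSeq f ∧ ∀ (i : Fin n) (k : ℕ), 0 ≤ (f i).coeff k

/-- An `m × n` matrix `G` of polynomials maps `F_n⁺` to `F_m⁺` if for every
`(f₁, …, f_n) ∈ F_n⁺` the sequence `(g₁, …, g_m)` with `g_k = ∑ i, G k i * f i`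
belongs to `F_m⁺`. -/
def MapsFPlus {m n : ℕ} (G : Matrix (Fin m) (Fin n) (Polynomial ℝ)) : Prop :=
  ∀ f : Fin n → Polynomial ℝ, MemFPlus f → MemFPlus fun k => ∑ i, G k i * f i

/-!
Feed the interlacing pair `(x + 1, x)` to `G = (p q; r s)` with nonnegative entries. The image
rows are the linear polynomials `(p + q) x + p` and `(r + s) x + r`, with zeros `-p / (p + q)`
and `-r / (r + s)`; the second zero lies strictly left of the first exactly when
`p s < q r`, i.e. when `det G < 0`, so the image pair is not interlacing. Multiplying both rows
by `x` adds the common zero `0` on top and leaves the comparison of the second zeros.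
-/

lemma rootsDesc_eq_singleton {f : ℝ[X]} {r : ℝ} (h : f.roots = {r}) : rootsDesc f = [r] := by
  rw [rootsDesc, h, Multiset.sort_singleton]

lemma rootsDesc_X_mul_eq_pair {f : ℝ[X]} {r : ℝ} (h : f.roots = {r}) (hr : r ≤ 0) :
    rootsDesc (X * f) = [0, r] := by
  have hf : f ≠ 0 := by rintro rfl; simp at h
  rw [rootsDesc, roots_mul (mul_ne_zero X_ne_zero hf), roots_X, h, Multiset.singleton_add,
    Multiset.sort_cons _ _ _ (by simpa using hr), Multiset.sort_singleton]

lemma realRooted_X_add_C (r : ℝ) : RealRooted (X + C r) := by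
  refine Or.inr fun z hz => ?_
  have : z = -r := by simpa [add_eq_zero_iff_eq_neg] using hz
  simp [this]

lemma not_interleaver_of_getElem_lt {f g : ℝ[X]} {i : ℕ} (hf : i < (rootsDesc f).length)
    (hg : i < (rootsDesc g).length) (hlt : (rootsDesc g)[i] < (rootsDesc f)[i]) :
    ¬ Interleaver f g := by
  rintro ⟨-, -, rfl | rfl | ⟨-, -, hle, -⟩⟩
  · simp [rootsDesc] at hf
  · simp [rootsDesc] at hg
  · exact hlt.not_ge (hle i hf hg)

section Linear

variable {a b c d : ℝ}

lemma not_interleaver_C_mul_X_add_C (ha : a ≠ 0) (hc : c ≠ 0)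
    (hlt : a⁻¹ * b < c⁻¹ * d) : ¬ Interleaver (C a * X + C b) (C c * X + C d) := by
  refine not_interleaver_of_getElem_lt (i := 0) ?_ ?_ ?_ <;>
    simp [rootsDesc_eq_singleton (roots_C_mul_X_add_C _ ha),
      rootsDesc_eq_singleton (roots_C_mul_X_add_C _ hc), hlt]

lemma not_interleaver_X_mul_C_mul_X_add_C (ha : a ≠ 0) (hc : c ≠ 0)
    (hb : 0 ≤ a⁻¹ * b) (hd : 0 ≤ c⁻¹ * d) (hlt : a⁻¹ * b < c⁻¹ * d) :
    ¬ Interleaver (X * (C a * X + C b)) (X * (C c * X + C d)) := by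
  refine not_interleaver_of_getElem_lt (i := 1) ?_ ?_ ?_ <;>
    simp [rootsDesc_X_mul_eq_pair (roots_C_mul_X_add_C _ ha) (neg_nonpos.mpr hb),
      rootsDesc_X_mul_eq_pair (roots_C_mul_X_add_C _ hc) (neg_nonpos.mpr hd), hlt]

end Linear

lemma memFPlus_X_add_one_X : MemFPlus ![X + 1, X] := by
  have hX1 : RealRooted (X + 1) := by simpa using realRooted_X_add_C 1
  have hX : RealRooted X := by simpa using realRooted_X_add_C 0
  have hinter : Interleaver (X + 1) X := by
    have h1 : rootsDesc (X + 1) = [-1] :=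
      rootsDesc_eq_singleton (by simpa [C_1] using roots_X_add_C (1 : ℝ))
    have h0 : rootsDesc X = [0] := rootsDesc_eq_singleton roots_X
    refine ⟨hX1, hX, Or.inr (Or.inr ⟨?_, ?_, ?_, ?_⟩)⟩
    · rw [← C_1, leadingCoeff_X_add_C]
      exact one_pos
    · simp
    · intro i hi _
      simp_all
    · intro i _ hi
      simp [h0] at hi
  refine ⟨⟨fun i => ?_, fun i j hij => ?_⟩, fun i k => ?_⟩
  · fin_cases i
    exacts [hX1, hX]
  · fin_cases i <;> fin_cases j <;> first | exact hinter | exact absurd hij (by decide)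
  · fin_cases i <;> simp only [Fin.zero_eta, Fin.mk_one, Matrix.cons_val_zero,
      Matrix.cons_val_one, coeff_add, coeff_X, coeff_one] <;> split_ifs <;> norm_num

section NegativeDeterminant

variable {G : Matrix (Fin 2) (Fin 2) ℝ} (hG : ∀ i j, 0 ≤ G i j) (hdet : G.det < 0)
include hG hdet

lemma rowSum_pos_of_det_neg (k : Fin 2) : 0 < G k 0 + G k 1 := by
  rw [Matrix.det_fin_two] at hdet
  have hdiag := mul_nonneg (hG 0 0) (hG 1 1)
  have h01 : 0 < G 0 1 := (hG 0 1).lt_of_ne fun h => by rw [← h] at hdet; linarith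
  have h10 : 0 < G 1 0 := (hG 1 0).lt_of_ne fun h => by rw [← h] at hdet; linarith
  fin_cases k
  · show 0 < G 0 0 + G 0 1
    linarith [hG 0 0]
  · show 0 < G 1 0 + G 1 1
    linarith [hG 1 1]

lemma inv_rowSum_mul_lt_of_det_neg :
    (G 0 0 + G 0 1)⁻¹ * G 0 0 < (G 1 0 + G 1 1)⁻¹ * G 1 0 := by
  have h0 := rowSum_pos_of_det_neg hG hdet 0
  have h1 := rowSum_pos_of_det_neg hG hdet 1
  rw [Matrix.det_fin_two] at hdet
  rw [inv_mul_eq_div, inv_mul_eq_div, div_lt_div_iff₀ h0 h1]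
  linarith

end NegativeDeterminant

lemma map_C_mul_X_add_one_X (G : Matrix (Fin 2) (Fin 2) ℝ) :
    (fun k => ∑ i, G.map C k i * ![X + 1, X] i) =
      fun k => C (G k 0 + G k 1) * X + C (G k 0) := by
  ext1 k
  simp only [Fin.sum_univ_two, Matrix.map_apply, Matrix.cons_val_zero, Matrix.cons_val_one,
    C_add]
  ring

theorem not_mapsFPlus_map_C_of_det_neg {G : Matrix (Fin 2) (Fin 2) ℝ} (hG : ∀ i j, 0 ≤ G i j)
    (hdet : G.det < 0) : ¬ MapsFPlus (G.map C) := by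
  intro hmap
  have h := (hmap _ memFPlus_X_add_one_X).1.2 0 1 Fin.zero_lt_one
  rw [map_C_mul_X_add_one_X] at h
  exact not_interleaver_C_mul_X_add_C (rowSum_pos_of_det_neg hG hdet 0).ne'
    (rowSum_pos_of_det_neg hG hdet 1).ne' (inv_rowSum_mul_lt_of_det_neg hG hdet) h

theorem not_mapsFPlus_X_mul_C_of_det_neg {G : Matrix (Fin 2) (Fin 2) ℝ}
    (hG : ∀ i j, 0 ≤ G i j) (hdet : G.det < 0) :
    ¬ MapsFPlus (Matrix.of fun i j => X * C (G i j)) := by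
  intro hmap
  have h := (hmap _ memFPlus_X_add_one_X).1.2 0 1 Fin.zero_lt_one
  have himage : (fun k => ∑ i, (Matrix.of fun i j => X * C (G i j)) k i * ![X + 1, X] i) =
      fun k => X * (C (G k 0 + G k 1) * X + C (G k 0)) := by
    simp_rw [Matrix.of_apply, mul_assoc, ← Finset.mul_sum]
    exact congrArg (fun f k => X * f k) (map_C_mul_X_add_one_X G)
  rw [himage] at h
  have hroot (k : Fin 2) : 0 ≤ (G k 0 + G k 1)⁻¹ * G k 0 :=
    mul_nonneg (inv_nonneg.mpr (rowSum_pos_of_det_neg hG hdet k).le) (hG k 0)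
  exact not_interleaver_X_mul_C_mul_X_add_C (rowSum_pos_of_det_neg hG hdet 0).ne'
    (rowSum_pos_of_det_neg hG hdet 1).ne' (hroot 0) (hroot 1)
    (inv_rowSum_mul_lt_of_det_neg hG hdet) h

/-- A `2 × 2` zero-one matrix with negative determinant fails to map `F₂⁺` to `F₂⁺`,
and so does `x` times such a matrix. -/
theorem stmt14 (G : Matrix (Fin 2) (Fin 2) ℝ)
    (hval : ∀ i j, G i j = 0 ∨ G i j = 1) (hdet : G.det < 0) :
    ¬ MapsFPlus (G.map Polynomial.C) ∧
      ¬ MapsFPlus (Matrix.of fun i j => Polynomial.X * Polynomial.C (G i j)) := by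
  have hG (i j : Fin 2) : 0 ≤ G i j := by rcases hval i j with h | h <;> simp [h]
  exact ⟨not_mapsFPlus_map_C_of_det_neg hG hdet, not_mapsFPlus_X_mul_C_of_det_neg hG hdet⟩
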